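/- arXiv:2212.07870 — 6 statements merged into one kernel-verified Lean document; each statement's English description precedes it below -/
import Mathlib

section
/- For a string S of length m, if B ⊆ {0,...,m} is prefix-incomparable for S (i.e., for all i < j in B, S[1..i] is not a border of S[1..j]), then |B| is at most the number of indices i ∈ {0,...,m} that are not in the image of the failure function f_S. -/
open List

section Defs

variable {V : Type*} {α : Type*}

/-- A border of `t` is a proper prefix of `t` that is also a proper suffix of `t`. -/
def IsBorder (b t : List α) : Prop :=
  b <+: t ∧ b <:+ t ∧ b.length < t.length

/-- A directed graph (edge relation) is acyclic. -/
def Acyclic (E : V → V → Prop) : Prop :=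
  ∀ v, ¬ Relation.TransGen E v v

def IsSource (E : V → V → Prop) (v : V) : Prop := ∀ u, ¬ E u v

def IsSink (E : V → V → Prop) (v : V) : Prop := ∀ w, ¬ E v w

/-- A path is a nonempty list of vertices with consecutive edges. -/
def IsPath (E : V → V → Prop) (p : List V) : Prop := p ≠ [] ∧ p.Chain' E

/-- The edge `(u,v)` occurs (as a consecutive pair) on the path `p`. -/
def EdgeOn (p : List V) (u v : V) : Prop := ∃ l₁ l₂, p = l₁ ++ u :: v :: l₂

/-- A source-to-sink path. -/
def SrcSinkPath (E : V → V → Prop) (p : List V) : Prop :=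
  IsPath E p ∧ (∃ s, p.head? = some s ∧ IsSource E s) ∧ ∃ t, p.getLast? = some t ∧ IsSink E t

/-- `μ_s(v)`: the number of source-to-`v` paths. -/
noncomputable def muS (E : V → V → Prop) (v : V) : ℕ :=
  Set.ncard {p : List V | IsPath E p ∧ (∃ s, p.head? = some s ∧ IsSource E s) ∧ p.getLast? = some v}

/-- `μ_t(v)`: the number of `v`-to-sink paths. -/
noncomputable def muT (E : V → V → Prop) (v : V) : ℕ :=
  Set.ncard {p : List V | IsPath E p ∧ p.head? = some v ∧ ∃ t, p.getLast? = some t ∧ IsSink E t}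

/-- `μ(e)` for `e = (u,v)`: the number of source-to-sink paths containing the edge `(u,v)`. -/
noncomputable def muE (E : V → V → Prop) (u v : V) : ℕ :=
  Set.ncard {p : List V | SrcSinkPath E p ∧ EdgeOn p u v}

def NoIsolated (E : V → V → Prop) : Prop := ∀ v : V, (∃ u, E u v) ∨ ∃ w, E v w

/-- `G` is a `k`-funnel: every source-to-sink path contains a `k`-private edge. -/
def KFunnel (E : V → V → Prop) (k : ℕ) : Prop :=
  ∀ p, SrcSinkPath E p → ∃ u v, EdgeOn p u v ∧ muE E u v ≤ k

/-- `G` is a funnel: every source-to-sink path contains a private edge. -/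
def Funnel (E : V → V → Prop) : Prop :=
  ∀ p, SrcSinkPath E p → ∃ u v, EdgeOn p u v ∧ muE E u v = 1

/-- `B_v`: the set of lengths `i` such that some path ending at `v` spells `S[1..i]`
(with `0` included for the empty path). -/
def MatchSet (E : V → V → Prop) (ℓ : V → α) (S : List α) (v : V) : Set ℕ :=
  {i | i ≤ S.length ∧ (i = 0 ∨ ∃ p, IsPath E p ∧ p.getLast? = some v ∧ p.map ℓ = S.take i)}

end Defs

open Classical

/-!
Link every `j ∈ [1, m]` to its parent `f j < j`: this makes `{0, …, m}` a forest whose roots are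
the indices outside the image of `f`. Along a path of the forest the prefixes of `S` form a chain
of borders, so each tree contains at most one element of a prefix-incomparable set `B`. Sending
every element of `B` to the root of its tree is therefore injective.
-/

section BorderForest

open Relation

variable {α β : Type*}

theorem IsBorder.trans {a b c : List α} (hab : IsBorder a b) (hbc : IsBorder b c) :
    IsBorder a c :=
  ⟨hab.1.trans hbc.1, hab.2.1.trans hbc.2.1, hab.2.2.trans hbc.2.2⟩

theorem lt_of_isBorder_take {S : List α} {b i : ℕ} (h : IsBorder (S.take b) (S.take i)) :
    b < i := by
  have := h.2.2
  simp only [List.length_take] at this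
  omega

section Forest

variable {E : β → β → Prop}

theorem WellFounded.exists_source_reflTransGen (hwf : WellFounded E) (b : β) :
    ∃ t, IsSource E t ∧ ReflTransGen E t b := by
  obtain ⟨t, ht, hmin⟩ := hwf.has_min {t | ReflTransGen E t b} ⟨b, .refl⟩
  exact ⟨t, fun a hat => hmin a (.head hat ht) hat, ht⟩

theorem injOn_of_reflTransGen_of_rightUnique (hE : Relator.RightUnique E) {B : Set β}
    (hB : ∀ a ∈ B, ∀ b ∈ B, ReflTransGen E a b → a = b) {φ : β → β}
    (hφ : ∀ b ∈ B, ReflTransGen E (φ b) b) : Set.InjOn φ B := by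
  intro a ha b hb hab
  have hb' := hφ b hb
  rw [← hab] at hb'
  rcases ReflTransGen.total_of_right_unique hE (hφ a ha) hb' with h | h
  · exact hB a ha b hb h
  · exact (hB b hb a ha h).symm

end Forest

def failureLink (m : ℕ) (f : ℕ → ℕ) (a b : ℕ) : Prop :=
  a ∈ Finset.Icc 1 m ∧ f a = b

section FailureTree

variable {S : List α} {m : ℕ} {f : ℕ → ℕ}

theorem failureLink_rightUnique : Relator.RightUnique (failureLink m f) := by
  rintro a b c ⟨-, rfl⟩ ⟨-, rfl⟩
  rfl

theorem le_of_reflTransGen_failureLink {t i : ℕ} (h : ReflTransGen (failureLink m f) t i)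
    (hi : i ≤ m) : t ≤ m := by
  rcases h.cases_head with rfl | ⟨_, ⟨ht, -⟩, -⟩
  · exact hi
  · exact (Finset.mem_Icc.1 ht).2

variable (hf : ∀ i ∈ Finset.Icc 1 m, IsBorder (S.take (f i)) (S.take i))
include hf

theorem wellFounded_failureLink : WellFounded (failureLink m f) := by
  refine Subrelation.wf ?_ (measure (m - ·)).wf
  rintro a b ⟨ha, rfl⟩
  show m - a < m - f a
  have := lt_of_isBorder_take (hf a ha)
  have := (Finset.mem_Icc.1 ha).2
  omega

theorem isBorder_of_transGen_failureLink {j i : ℕ} (h : TransGen (failureLink m f) j i) :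
    IsBorder (S.take i) (S.take j) := by
  induction h with
  | single hji => exact hji.2 ▸ hf j hji.1
  | tail _ hai ih => exact (hai.2 ▸ hf _ hai.1).trans ih

end FailureTree

end BorderForest

theorem stmt0_general {α : Type*} (S : List α) (m : ℕ)
    (f : ℕ → ℕ)
    (hf : ∀ i, 1 ≤ i → i ≤ m →
      IsBorder (S.take (f i)) (S.take i) ∧ ∀ b, IsBorder (S.take b) (S.take i) → b ≤ f i)
    (B : Finset ℕ) (hB : B ⊆ Finset.Icc 0 m)
    (hinc : ∀ i ∈ B, ∀ j ∈ B, i < j → ¬ IsBorder (S.take i) (S.take j)) :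
    B.card ≤ ((Finset.Icc 0 m).filter (fun i => ∀ j ∈ Finset.Icc 1 m, f j ≠ i)).card := by
  have hborder : ∀ i ∈ Finset.Icc 1 m, IsBorder (S.take (f i)) (S.take i) :=
    fun i hi => (hf i (Finset.mem_Icc.1 hi).1 (Finset.mem_Icc.1 hi).2).1
  choose root hroot using (wellFounded_failureLink hborder).exists_source_reflTransGen
  apply Finset.card_le_card_of_injOn root
  · intro i hi
    have him := (Finset.mem_Icc.1 (hB hi)).2
    simp only [Finset.mem_coe, Finset.mem_filter]
    exact ⟨Finset.mem_Icc.2 ⟨Nat.zero_le _, le_of_reflTransGen_failureLink (hroot i).2 him⟩,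
      fun j hj hfj => (hroot i).1 j ⟨hj, hfj⟩⟩
  · refine injOn_of_reflTransGen_of_rightUnique failureLink_rightUnique ?_ fun b _ => (hroot b).2
    intro a ha b hb hab
    rcases Relation.reflTransGen_iff_eq_or_transGen.1 hab with h | h
    · exact h.symm
    · have hba := isBorder_of_transGen_failureLink hborder h
      exact absurd hba (hinc b hb a ha (lt_of_isBorder_take hba))

/-- A prefix-incomparable set `B ⊆ {0,…,m}` has size at most the number of
indices in `{0,…,m}` not in the image of the failure function of `S`. -/
theorem stmt0 {α : Type*} (S : List α) (m : ℕ) (hm : S.length = m)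
    (f : ℕ → ℕ)
    (hf : ∀ i, 1 ≤ i → i ≤ m →
      IsBorder (S.take (f i)) (S.take i) ∧ ∀ b, IsBorder (S.take b) (S.take i) → b ≤ f i)
    (B : Finset ℕ) (hB : B ⊆ Finset.Icc 0 m)
    (hinc : ∀ i ∈ B, ∀ j ∈ B, i < j → ¬ IsBorder (S.take i) (S.take j)) :
    B.card ≤ ((Finset.Icc 0 m).filter (fun i => ∀ j ∈ Finset.Icc 1 m, f j ≠ i)).card :=
  stmt0_general S m f hf B hB hinc
end

section
/- Let G be a DAG, v a vertex, and let μ_s(v) denote the number of source-to-v paths. Then |PI_v| ≤ μ_s(v), where PI_v is the unique prefix-incomparable set representing all prefix matches of S ending at v. -/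
open List

/-!
Extend each path witnessing `i ∈ PI` backwards to a source-to-`v` path. Two paths ending at the
same vertex of one source path are suffixes of each other, so the shorter word is a border of the
longer one; prefix-incomparability of `PI` therefore makes this choice of source paths injective
(`0 ∈ PI` is witnessed by the empty suffix of any source-to-`v` path). Acyclicity over a finite
vertex set makes the set of source-to-`v` paths finite.
-/

section PrefixPaths

variable {V α : Type*} {E : V → V → Prop}

def SourcePaths (E : V → V → Prop) (v : V) : Set (List V) :=
  {p | IsPath E p ∧ (∃ s, p.head? = some s ∧ IsSource E s) ∧ p.getLast? = some v}

theorem Acyclic.nodup_of_isChain (hE : Acyclic E) {p : List V} (hp : p.IsChain E) : p.Nodup :=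
  haveI : Std.Irrefl (Relation.TransGen E) := ⟨hE⟩
  (hp.imp fun _ _ => Relation.TransGen.single).pairwise.nodup

theorem Acyclic.finite_of_forall_isPath [Fintype V] (hE : Acyclic E) {T : Set (List V)}
    (hT : ∀ p ∈ T, IsPath E p) : T.Finite :=
  (List.finite_length_le V (Fintype.card V)).subset fun p hp =>
    (hE.nodup_of_isChain (hT p hp).2).length_le_card

theorem Acyclic.exists_mem_sourcePaths_suffix [Fintype V] (hE : Acyclic E) {p : List V} {v : V}
    (hp : IsPath E p) (hv : p.getLast? = some v) : ∃ q ∈ SourcePaths E v, p <:+ q := by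
  let T : Set (List V) := {q | IsPath E q ∧ q.getLast? = some v ∧ p <:+ q}
  obtain ⟨q, ⟨⟨hq, hqE⟩, hqv, hpq⟩, hmax⟩ :=
    (hE.finite_of_forall_isPath (T := T) fun q hq => hq.1).exists_maximalFor List.length T
      ⟨p, hp, hv, List.suffix_refl p⟩
  obtain ⟨s, t, rfl⟩ := List.exists_cons_of_ne_nil hq
  refine ⟨s :: t, ⟨⟨hq, hqE⟩, ⟨s, rfl, fun u hu => ?_⟩, hqv⟩, hpq⟩
  -- a predecessor `u` of `s` would give a longer path in `T`
  have hlonger : u :: s :: t ∈ T :=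
    ⟨⟨List.cons_ne_nil _ _, List.isChain_cons_cons.mpr ⟨hu, hqE⟩⟩,
      by rwa [List.getLast?_cons_cons], hpq.trans (List.suffix_cons u _)⟩
  simpa using hmax hlonger (by simp)

theorem Acyclic.exists_mem_sourcePaths_of_mem_matchSet [Fintype V] (hE : Acyclic E)
    {ℓ : V → α} {S : List α} {v : V} {i : ℕ} (hi : i ∈ MatchSet E ℓ S v) :
    ∃ q ∈ SourcePaths E v, ∃ p, p <:+ q ∧ p.map ℓ = S.take i := by
  obtain ⟨-, rfl | ⟨p, hp, hpv, hpS⟩⟩ := hi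
  · obtain ⟨q, hq, -⟩ := hE.exists_mem_sourcePaths_suffix (p := [v])
      ⟨List.cons_ne_nil _ _, List.isChain_singleton v⟩ rfl
    exact ⟨q, hq, [], List.nil_suffix, by simp⟩
  · obtain ⟨q, hq, hpq⟩ := hE.exists_mem_sourcePaths_suffix hp hpv
    exact ⟨q, hq, p, hpq, hpS⟩

end PrefixPaths

theorem isBorder_take_of_suffix {α : Type*} {S : List α} {i j : ℕ} (hij : i < j)
    (hj : j ≤ S.length) (h : S.take i <:+ S.take j) : IsBorder (S.take i) (S.take j) :=
  ⟨List.take_prefix_take_left hij.le, h, by simp only [List.length_take]; omega⟩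

theorem isBorder_take_of_map_suffix {V α : Type*} {ℓ : V → α} {S : List α} {i j : ℕ}
    {p₁ p₂ q : List V} (hij : i < j) (hj : j ≤ S.length)
    (h₁ : p₁ <:+ q) (h₂ : p₂ <:+ q) (hp₁ : p₁.map ℓ = S.take i) (hp₂ : p₂.map ℓ = S.take j) :
    IsBorder (S.take i) (S.take j) := by
  have hlen : p₁.length ≤ p₂.length := by
    have h₁ := congrArg List.length hp₁
    have h₂ := congrArg List.length hp₂
    simp only [List.length_map, List.length_take] at h₁ h₂
    omega
  refine isBorder_take_of_suffix hij hj ?_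
  rw [← hp₁, ← hp₂]
  exact (List.suffix_of_suffix_length_le h₁ h₂ hlen).map ℓ

theorem stmt3_general {V α : Type*} [Fintype V] (E : V → V → Prop) (hE : Acyclic E)
    (ℓ : V → α) (S : List α) (v : V) (PI : Set ℕ)
    (hsub : PI ⊆ MatchSet E ℓ S v)
    (hinc : ∀ i ∈ PI, ∀ j ∈ PI, i < j → ¬ IsBorder (S.take i) (S.take j)) :
    PI.ncard ≤ muS E v := by
  choose! f hf p hpf hpS using fun i (hi : i ∈ PI) =>
    hE.exists_mem_sourcePaths_of_mem_matchSet (hsub hi)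
  have hinj : Set.InjOn f PI := by
    intro i hi j hj hfij
    by_contra hne
    wlog hij : i < j generalizing i j
    · exact this hj hi hfij.symm (Ne.symm hne) (by omega)
    exact hinc i hi j hj hij <| isBorder_take_of_map_suffix hij (hsub hj).1 (hpf i hi)
      (hfij ▸ hpf j hj) (hpS i hi) (hpS j hj)
  exact Set.ncard_le_ncard_of_injOn f hf hinj (hE.finite_of_forall_isPath fun q hq => hq.1)

/-- `|PI_v| ≤ μ_s(v)`. -/
theorem stmt3 {V α : Type*} [Fintype V] (E : V → V → Prop) (hE : Acyclic E)
    (ℓ : V → α) (S : List α) (v : V) (PI : Set ℕ)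
    (hsub : PI ⊆ MatchSet E ℓ S v)
    (hinc : ∀ i ∈ PI, ∀ j ∈ PI, i < j → ¬ IsBorder (S.take i) (S.take j))
    (hrep : ∀ i ∈ MatchSet E ℓ S v, ∃ j ∈ PI, i = j ∨ IsBorder (S.take i) (S.take j)) :
    PI.ncard ≤ muS E v :=
  stmt3_general E hE ℓ S v PI hsub hinc
end

section
/- A DAG G is a funnel if and only if there exists a partition V = V1 ∪ V2 such that G[V1] is an out-forest (every vertex has indegree at most 1 within G[V1]), G[V2] is an in-forest (every vertex has outdegree at most 1), and there are no edges from V2 to V1. -/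
open List

/-!
Write `μ_s(v)` and `μ_t(v)` for the numbers of source-to-`v` and `v`-to-sink paths. For an edge `xy`
both `μ_s(x)` and `μ_t(y)` are at most the number `μ(xy)` of source-to-sink paths through `xy`, and
`μ(xy) = 1` as soon as `μ_s(x) = μ_t(y) = 1`; so `xy` is private iff `μ_s(x) = μ_t(y) = 1`. Since
`μ_s` can only grow and `μ_t` only shrink along paths, `G` is a funnel iff every vertex has
`μ_s = 1` or `μ_t = 1`: a vertex with both counts `≥ 2` lies on a source-to-sink path, and its
private edge would lie either after it or before it; conversely, walking along a source-to-sink path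
from `μ_s = 1` (at the source) to `μ_t = 1` (at the sink) one meets an edge `xy` with
`μ_s(x) = μ_t(y) = 1`.

The partition is `V₁ = {μ_s = 1}`: `μ_s(v) = 1` forces indegree `≤ 1` and `μ_t(v) = 1` forces
outdegree `≤ 1`. Conversely, in an out-forest closed under predecessors every vertex has a unique
source path, and dually for in-forests closed under successors.
-/

open Relation

section Acyclicity

variable {V : Type*} {E : V → V → Prop}

theorem acyclic_flip (hE : Acyclic E) : Acyclic (flip E) :=
  fun v h => hE v (transGen_swap.1 h)

theorem Acyclic.nodup {p : List V} (hE : Acyclic E) (hp : p.IsChain E) : p.Nodup :=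
  (hp.imp fun _ _ => TransGen.single).pairwise.imp (S := (· ≠ ·)) fun h huv => hE _ (huv ▸ h)

theorem Acyclic.finite_of_isChain [Finite V] (hE : Acyclic E) {S : Set (List V)}
    (hS : ∀ p ∈ S, p.IsChain E) : S.Finite :=
  (List.finite_length_le V (Nat.card V)).subset fun p hp =>
    (hE.nodup (hS p hp)).length_le_natCard

theorem Acyclic.wellFounded_flip [Finite V] (hE : Acyclic E) : WellFounded (flip E) :=
  have : Std.Irrefl (TransGen (flip E)) := ⟨acyclic_flip hE⟩
  (Finite.wellFounded_of_trans_of_irrefl _).mono fun _ _ => TransGen.single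

end Acyclicity

theorem Set.ncard_eq_one_iff_subsingleton {α : Type*} {s : Set α} (hs : s.Finite)
    (hne : s.Nonempty) : s.ncard = 1 ↔ s.Subsingleton := by
  obtain ⟨a, ha⟩ := hne
  refine ⟨fun h => (Set.ncard_le_one hs).1 h.le, fun h => ?_⟩
  rw [h.eq_singleton_of_mem ha, Set.ncard_singleton]

section Paths

variable {V : Type*} {E : V → V → Prop} {v w : V} {p : List V}

def sinkPaths (E : V → V → Prop) (v : V) : Set (List V) :=
  {p | IsPath E p ∧ p.head? = some v ∧ ∃ t, p.getLast? = some t ∧ IsSink E t}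

def sourcePaths (E : V → V → Prop) (v : V) : Set (List V) :=
  {p | IsPath E p ∧ (∃ s, p.head? = some s ∧ IsSource E s) ∧ p.getLast? = some v}

theorem muT_eq_ncard : muT E v = (sinkPaths E v).ncard := rfl

theorem muS_eq_ncard : muS E v = (sourcePaths E v).ncard := rfl

theorem exists_eq_cons_of_mem_sinkPaths (hp : p ∈ sinkPaths E v) : ∃ m, p = v :: m :=
  List.head?_eq_some_iff.1 hp.2.1

theorem cons_mem_sinkPaths {q : List V} (hvw : E v w) (hq : q ∈ sinkPaths E w) :
    v :: q ∈ sinkPaths E v := by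
  obtain ⟨⟨-, hch⟩, hh, t, ht, hsink⟩ := hq
  obtain ⟨m, rfl⟩ := List.head?_eq_some_iff.1 hh
  exact ⟨⟨List.cons_ne_nil _ _, hch.cons_cons hvw⟩, rfl, t, List.getLast?_cons_cons.trans ht, hsink⟩

theorem mem_sinkPaths_cases (hp : p ∈ sinkPaths E v) :
    (p = [v] ∧ IsSink E v) ∨ ∃ w q, E v w ∧ q ∈ sinkPaths E w ∧ p = v :: q := by
  obtain ⟨⟨-, hch⟩, hh, t, ht, hsink⟩ := hp
  obtain ⟨m, rfl⟩ := List.head?_eq_some_iff.1 hh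
  cases m with
  | nil =>
    obtain rfl : v = t := by simpa using ht
    exact .inl ⟨rfl, hsink⟩
  | cons w m =>
    obtain ⟨hvw, hch⟩ := List.isChain_cons_cons.1 hch
    exact .inr ⟨w, w :: m, hvw,
      ⟨⟨List.cons_ne_nil _ _, hch⟩, rfl, t, List.getLast?_cons_cons.symm.trans ht, hsink⟩, rfl⟩

variable [Finite V]

theorem sinkPaths_finite (hE : Acyclic E) (v : V) : (sinkPaths E v).Finite :=
  hE.finite_of_isChain fun _ hp => hp.1.2

theorem sinkPaths_nonempty (hE : Acyclic E) (v : V) : (sinkPaths E v).Nonempty := by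
  induction v using hE.wellFounded_flip.induction with
  | _ v ih =>
    by_cases hv : IsSink E v
    · exact ⟨[v], ⟨List.cons_ne_nil _ _, List.isChain_singleton v⟩, rfl, v, rfl, hv⟩
    · obtain ⟨w, hvw⟩ : ∃ w, E v w := by simpa [IsSink] using hv
      obtain ⟨q, hq⟩ := ih w hvw
      exact ⟨v :: q, cons_mem_sinkPaths hvw hq⟩

theorem muT_pos (hE : Acyclic E) (v : V) : 0 < muT E v :=
  (Set.ncard_pos (sinkPaths_finite hE v)).2 (sinkPaths_nonempty hE v)

theorem muT_eq_one_iff (hE : Acyclic E) : muT E v = 1 ↔ (sinkPaths E v).Subsingleton :=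
  Set.ncard_eq_one_iff_subsingleton (sinkPaths_finite hE v) (sinkPaths_nonempty hE v)

theorem muT_le_of_rel (hE : Acyclic E) (hvw : E v w) : muT E w ≤ muT E v :=
  Set.ncard_le_ncard_of_injOn (v :: ·) (fun _ hq => cons_mem_sinkPaths hvw hq)
    (fun _ _ _ _ h => List.cons_injective h) (sinkPaths_finite hE v)

theorem muT_anti (hE : Acyclic E) (h : ReflTransGen E v w) : muT E w ≤ muT E v := by
  induction h with
  | refl => exact le_rfl
  | tail _ hbc ih => exact (muT_le_of_rel hE hbc).trans ih

theorem subsingleton_succ_of_muT_eq_one (hE : Acyclic E) (h : muT E v = 1) :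
    {w | E v w}.Subsingleton := by
  intro w hw w' hw'
  obtain ⟨q, hq⟩ := sinkPaths_nonempty hE w
  obtain ⟨q', hq'⟩ := sinkPaths_nonempty hE w'
  have := (muT_eq_one_iff hE).1 h (cons_mem_sinkPaths hw hq) (cons_mem_sinkPaths hw' hq')
  obtain ⟨m, rfl⟩ := exists_eq_cons_of_mem_sinkPaths hq
  obtain ⟨m', rfl⟩ := exists_eq_cons_of_mem_sinkPaths hq'
  exact (List.cons.inj (List.cons.inj this).2).1

theorem muT_eq_one_of_inForest (hE : Acyclic E) {W : Set V}
    (hclosed : ∀ v ∈ W, ∀ w, E v w → w ∈ W) (hW : ∀ v ∈ W, {w | w ∈ W ∧ E v w}.Subsingleton)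
    (hv : v ∈ W) : muT E v = 1 := by
  rw [muT_eq_one_iff hE]
  induction v using hE.wellFounded_flip.induction with
  | _ v ih =>
    intro p hp p' hp'
    rcases mem_sinkPaths_cases hp with ⟨rfl, hsink⟩ | ⟨w, q, hvw, hq, rfl⟩ <;>
      rcases mem_sinkPaths_cases hp' with ⟨rfl, hsink'⟩ | ⟨w', q', hvw', hq', rfl⟩
    · rfl
    · exact absurd hvw' (hsink w')
    · exact absurd hvw (hsink' w)
    · obtain rfl : w = w' := hW v hv ⟨hclosed v hv w hvw, hvw⟩ ⟨hclosed v hv w' hvw', hvw'⟩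
      rw [ih w hvw (hclosed v hv w hvw) hq hq']

theorem muT_eq_one_of_isSink (hE : Acyclic E) (ht : IsSink E v) : muT E v = 1 :=
  muT_eq_one_of_inForest hE (W := {v}) (fun _ hu w huw => absurd (hu ▸ huw) (ht w))
    (fun _ hu w hw => absurd (hu ▸ hw.2) (ht w)) rfl

end Paths

section Duality

variable {V : Type*} {E : V → V → Prop} {u v : V} {p : List V}

theorem isPath_flip_reverse : IsPath (flip E) p.reverse ↔ IsPath E p :=
  and_congr (not_congr List.reverse_eq_nil_iff) List.isChain_reverse

theorem sourcePaths_eq_image_reverse :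
    sourcePaths E v = List.reverse '' sinkPaths (flip E) v := by
  rw [List.reverse_involutive.image_eq_preimage_symm]
  ext p
  simp only [sourcePaths, sinkPaths, Set.mem_ofPred_eq, Set.mem_preimage, isPath_flip_reverse,
    List.head?_reverse, List.getLast?_reverse]
  exact and_congr_right' and_comm

theorem muS_eq_muT_flip : muS E v = muT (flip E) v := by
  rw [muS_eq_ncard, sourcePaths_eq_image_reverse,
    Set.ncard_image_of_injective _ List.reverse_injective, muT_eq_ncard]

variable [Finite V]

theorem sourcePaths_finite (hE : Acyclic E) (v : V) : (sourcePaths E v).Finite :=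
  hE.finite_of_isChain fun _ hp => hp.1.2

theorem sourcePaths_nonempty (hE : Acyclic E) (v : V) : (sourcePaths E v).Nonempty := by
  rw [sourcePaths_eq_image_reverse]
  exact (sinkPaths_nonempty (acyclic_flip hE) v).image _

theorem muS_pos (hE : Acyclic E) (v : V) : 0 < muS E v :=
  muS_eq_muT_flip (E := E) ▸ muT_pos (acyclic_flip hE) v

theorem muS_eq_one_iff (hE : Acyclic E) : muS E v = 1 ↔ (sourcePaths E v).Subsingleton :=
  Set.ncard_eq_one_iff_subsingleton (sourcePaths_finite hE v) (sourcePaths_nonempty hE v)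

theorem muS_mono (hE : Acyclic E) (h : ReflTransGen E u v) : muS E u ≤ muS E v := by
  simpa only [muS_eq_muT_flip] using muT_anti (acyclic_flip hE) (reflTransGen_swap.2 h)

theorem subsingleton_pred_of_muS_eq_one (hE : Acyclic E) (h : muS E v = 1) :
    {u | E u v}.Subsingleton :=
  subsingleton_succ_of_muT_eq_one (acyclic_flip hE) (muS_eq_muT_flip (E := E) ▸ h)

theorem muS_eq_one_of_outForest (hE : Acyclic E) {W : Set V}
    (hclosed : ∀ v ∈ W, ∀ u, E u v → u ∈ W) (hW : ∀ v ∈ W, {u | u ∈ W ∧ E u v}.Subsingleton)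
    (hv : v ∈ W) : muS E v = 1 :=
  muS_eq_muT_flip (E := E) ▸ muT_eq_one_of_inForest (acyclic_flip hE) hclosed hW hv

theorem muS_eq_one_of_isSource (hE : Acyclic E) (hs : IsSource E v) : muS E v = 1 :=
  muS_eq_muT_flip (E := E) ▸ muT_eq_one_of_isSink (acyclic_flip hE) hs

end Duality

section PrivateEdges

variable {V : Type*} {E : V → V → Prop} {v x y : V} {p : List V}

theorem srcSinkPath_append_cons_iff {l m : List V} :
    SrcSinkPath E (l ++ v :: m) ↔ l ++ [v] ∈ sourcePaths E v ∧ v :: m ∈ sinkPaths E v := by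
  have hhead : (l ++ v :: m).head? = (l ++ [v]).head? := by cases l <;> rfl
  constructor
  · rintro ⟨⟨-, hch⟩, hs, t, ht, hsink⟩
    obtain ⟨hl, hm⟩ := List.isChain_split.1 hch
    exact ⟨⟨⟨by simp, hl⟩, hhead ▸ hs, by simp⟩, ⟨by simp, hm⟩, rfl, t,
      List.getLast?_append_cons .. ▸ ht, hsink⟩
  · rintro ⟨⟨⟨-, hl⟩, hs, -⟩, ⟨-, hm⟩, -, t, ht, hsink⟩
    exact ⟨⟨by simp, List.isChain_split.2 ⟨hl, hm⟩⟩, hhead ▸ hs, t,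
      List.getLast?_append_cons .. ▸ ht, hsink⟩

theorem EdgeOn.rel (hp : p.IsChain E) (he : EdgeOn p x y) : E x y := by
  obtain ⟨l, m, rfl⟩ := he
  exact (List.isChain_append_cons_cons.1 hp).2.1

theorem EdgeOn.reflTransGen_or {v : V} (hp : p.IsChain E) (he : EdgeOn p x y) (hv : v ∈ p) :
    ReflTransGen E v x ∨ ReflTransGen E y v := by
  obtain ⟨l, m, rfl⟩ := he
  obtain ⟨-, hxym, hl⟩ := List.pairwise_append.1 (hp.imp fun _ _ => TransGen.single).pairwise
  obtain ⟨-, hym⟩ := List.pairwise_cons.1 hxym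
  obtain ⟨hm, -⟩ := List.pairwise_cons.1 hym
  simp only [List.mem_append, List.mem_cons] at hv
  rcases hv with hv | rfl | rfl | hv
  · exact .inl (hl v hv x List.mem_cons_self).to_reflTransGen
  · exact .inl .refl
  · exact .inr .refl
  · exact .inr (hm v hv).to_reflTransGen

variable [Finite V]

theorem exists_srcSinkPath_mem (hE : Acyclic E) (v : V) : ∃ p, SrcSinkPath E p ∧ v ∈ p := by
  obtain ⟨q, hq⟩ := sourcePaths_nonempty hE v
  obtain ⟨r, hr⟩ := sinkPaths_nonempty hE v
  obtain ⟨l, rfl⟩ := List.getLast?_eq_some_iff.1 hq.2.2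
  obtain ⟨m, rfl⟩ := exists_eq_cons_of_mem_sinkPaths hr
  exact ⟨l ++ v :: m, srcSinkPath_append_cons_iff.2 ⟨hq, hr⟩, by simp⟩

theorem muS_le_muE (hE : Acyclic E) (hxy : E x y) : muS E x ≤ muE E x y := by
  obtain ⟨r, hr⟩ := sinkPaths_nonempty hE y
  obtain ⟨m, rfl⟩ := exists_eq_cons_of_mem_sinkPaths hr
  refine Set.ncard_le_ncard_of_injOn (· ++ y :: m) (fun q hq => ?_)
    (fun _ _ _ _ h => List.append_cancel_right h) (hE.finite_of_isChain fun _ hp => hp.1.1.2)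
  obtain ⟨l, rfl⟩ := List.getLast?_eq_some_iff.1 hq.2.2
  refine ⟨?_, l, m, by simp⟩
  simpa using srcSinkPath_append_cons_iff.2 ⟨hq, cons_mem_sinkPaths hxy hr⟩

theorem muT_le_muE (hE : Acyclic E) (hxy : E x y) : muT E y ≤ muE E x y := by
  obtain ⟨q, hq⟩ := sourcePaths_nonempty hE x
  obtain ⟨l, rfl⟩ := List.getLast?_eq_some_iff.1 hq.2.2
  refine Set.ncard_le_ncard_of_injOn (l ++ x :: ·) (fun r hr => ?_)
    (fun _ _ _ _ h => List.cons_injective (List.append_cancel_left h))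
    (hE.finite_of_isChain fun _ hp => hp.1.1.2)
  obtain ⟨m, rfl⟩ := exists_eq_cons_of_mem_sinkPaths hr
  exact ⟨srcSinkPath_append_cons_iff.2 ⟨hq, cons_mem_sinkPaths hxy hr⟩, l, m, rfl⟩

theorem muE_le_one (hE : Acyclic E) (hx : muS E x = 1) (hy : muT E y = 1) : muE E x y ≤ 1 := by
  have hsplit {p : List V} (hp : SrcSinkPath E p ∧ EdgeOn p x y) :
      ∃ l m, p = l ++ x :: y :: m ∧ l ++ [x] ∈ sourcePaths E x ∧ y :: m ∈ sinkPaths E y := by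
    obtain ⟨hp, l, m, rfl⟩ := hp
    refine ⟨l, m, rfl, (srcSinkPath_append_cons_iff.1 hp).1, ?_⟩
    exact (srcSinkPath_append_cons_iff (l := l ++ [x]).1 (by simpa using hp)).2
  refine (Set.ncard_le_one (hE.finite_of_isChain fun _ hp => hp.1.1.2)).2 fun p hp p' hp' => ?_
  obtain ⟨l, m, rfl, hl, hm⟩ := hsplit hp
  obtain ⟨l', m', rfl, hl', hm'⟩ := hsplit hp'
  obtain rfl := List.append_cancel_right ((muS_eq_one_iff hE).1 hx hl hl')
  obtain rfl := List.cons_injective ((muT_eq_one_iff hE).1 hy hm hm')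
  rfl

theorem muE_eq_one_iff (hE : Acyclic E) (hp : SrcSinkPath E p) (he : EdgeOn p x y) :
    muE E x y = 1 ↔ muS E x = 1 ∧ muT E y = 1 := by
  have hxy := he.rel hp.1.2
  have hpos : 0 < muE E x y :=
    (Set.ncard_pos (hE.finite_of_isChain fun _ hp => hp.1.1.2)).2 ⟨p, hp, he⟩
  have hSx := muS_le_muE hE hxy
  have hTy := muT_le_muE hE hxy
  have hSx_pos := muS_pos hE x
  have hTy_pos := muT_pos hE y
  refine ⟨fun h => ⟨by omega, by omega⟩, fun ⟨hx, hy⟩ => ?_⟩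
  have hle := muE_le_one hE hx hy
  omega

end PrivateEdges

section Funnel

variable {V : Type*} {E : V → V → Prop}

theorem exists_edgeOn_of_forall_or {P Q : V → Prop} {a b : V} {l : List V} (ha : P a)
    (hlast : ∀ t, (b :: l).getLast? = some t → Q t) (hPQ : ∀ v ∈ b :: l, P v ∨ Q v) :
    ∃ x y, EdgeOn (a :: b :: l) x y ∧ P x ∧ Q y := by
  induction l generalizing a b with
  | nil => exact ⟨a, b, ⟨[], [], rfl⟩, ha, hlast b rfl⟩
  | cons c l ih =>
    by_cases hb : Q b
    · exact ⟨a, b, ⟨[], c :: l, rfl⟩, ha, hb⟩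
    obtain ⟨x, y, ⟨l₁, l₂, h⟩, hx, hy⟩ := ih ((hPQ b List.mem_cons_self).resolve_right hb)
      (fun t ht => hlast t (List.getLast?_cons_cons.trans ht))
      (fun v hv => hPQ v (List.mem_cons_of_mem b hv))
    exact ⟨x, y, ⟨a :: l₁, l₂, by rw [h]; rfl⟩, hx, hy⟩

variable [Finite V]

theorem muT_eq_one_of_funnel {v : V} (hE : Acyclic E) (hF : Funnel E) (hv : muS E v ≠ 1) :
    muT E v = 1 := by
  obtain ⟨p, hp, hvp⟩ := exists_srcSinkPath_mem hE v
  obtain ⟨x, y, he, hxy⟩ := hF p hp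
  obtain ⟨hx, hy⟩ := (muE_eq_one_iff hE hp he).1 hxy
  rcases he.reflTransGen_or hp.1.2 hvp with hvx | hyv
  · exact absurd (le_antisymm (hx ▸ muS_mono hE hvx) (muS_pos hE v)) hv
  · exact le_antisymm (hy ▸ muT_anti hE hyv) (muT_pos hE v)

theorem funnel_of_forall_muS_eq_one_or_muT_eq_one (hE : Acyclic E) (hni : NoIsolated E)
    (h : ∀ v, muS E v = 1 ∨ muT E v = 1) : Funnel E := by
  intro p hp
  obtain ⟨-, ⟨s, hs, hsrc⟩, t, ht, hsink⟩ := id hp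
  obtain ⟨_ | ⟨b, l⟩, rfl⟩ := List.head?_eq_some_iff.1 hs
  · obtain rfl : s = t := by simpa using ht
    rcases hni s with ⟨u, hu⟩ | ⟨w, hw⟩
    exacts [(hsrc u hu).elim, (hsink w hw).elim]
  have hlast (t' : V) (ht' : (b :: l).getLast? = some t') : muT E t' = 1 := by
    rw [← List.getLast?_cons_cons (a := s), ht, Option.some_inj] at ht'
    exact muT_eq_one_of_isSink hE (ht' ▸ hsink)
  obtain ⟨x, y, he, hx, hy⟩ := exists_edgeOn_of_forall_or (P := (muS E · = 1))
    (muS_eq_one_of_isSource hE hsrc) hlast fun v _ => h v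
  exact ⟨x, y, he, (muE_eq_one_iff hE hp he).2 ⟨hx, hy⟩⟩

theorem funnel_iff_forall_muS_eq_one_or_muT_eq_one (hE : Acyclic E) (hni : NoIsolated E) :
    Funnel E ↔ ∀ v, muS E v = 1 ∨ muT E v = 1 :=
  ⟨fun hF _ => or_iff_not_imp_left.2 (muT_eq_one_of_funnel hE hF),
    funnel_of_forall_muS_eq_one_or_muT_eq_one hE hni⟩

end Funnel

/-- Funnel iff there is a partition `V = V₁ ∪ V₂` with `G[V₁]` an out-forest,
`G[V₂]` an in-forest, and no edges from `V₂` to `V₁`. -/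
theorem stmt7 {V : Type*} [Fintype V] (E : V → V → Prop) (hE : Acyclic E)
    (hni : NoIsolated E) :
    Funnel E ↔ ∃ V₁ V₂ : Set V, V₁ ∪ V₂ = Set.univ ∧ Disjoint V₁ V₂ ∧
      (∀ v ∈ V₁, {u | u ∈ V₁ ∧ E u v}.Subsingleton) ∧
      (∀ v ∈ V₂, {w | w ∈ V₂ ∧ E v w}.Subsingleton) ∧
      ∀ u ∈ V₂, ∀ w ∈ V₁, ¬ E u w := by
  rw [funnel_iff_forall_muS_eq_one_or_muT_eq_one hE hni]
  constructor
  · intro h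
    refine ⟨{v | muS E v = 1}, {v | muS E v = 1}ᶜ, Set.union_compl_self _, disjoint_compl_right,
      fun v hv => (subsingleton_pred_of_muS_eq_one hE hv).anti fun _ hu => hu.2,
      fun v hv => (subsingleton_succ_of_muT_eq_one hE ((h v).resolve_left hv)).anti
        fun _ hw => hw.2,
      fun u hu w hw huw => hu (le_antisymm (hw ▸ muS_mono hE (.single huw)) (muS_pos hE u))⟩
  · rintro ⟨V₁, V₂, hcover, -, hin, hout, hcross⟩ v
    have hmem (v : V) : v ∈ V₁ ∨ v ∈ V₂ := by simpa [← hcover] using Set.mem_univ v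
    have hpred (v) (hv : v ∈ V₁) (u) (huv : E u v) : u ∈ V₁ :=
      (hmem u).resolve_right fun hu => hcross u hu v hv huv
    have hsucc (v) (hv : v ∈ V₂) (w) (hvw : E v w) : w ∈ V₂ :=
      (hmem w).resolve_left fun hw => hcross v hv w hw hvw
    exact (hmem v).imp (muS_eq_one_of_outForest hE hpred hin) (muT_eq_one_of_inForest hE hsucc hout)
end

section
/- A DAG G is a funnel if and only if it contains no forbidden path, i.e., no path whose first vertex has indegree at least 2 and whose last vertex has outdegree at least 2. -/
open List

/-! If a forbidden path `p` existed, extend it backwards through two distinct in-neighbours `a, b`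
of its first vertex to sources, and forwards through two distinct out-neighbours `c, d` of its last
vertex to sinks. A private edge of the source-to-sink path through `a` and `c` lies either before
the end of `p`, a part shared with the path through `a` and `d`, or after the start of `p`, a part
shared with the path through `b` and `c`; either way it is not private.

Conversely, on a source-to-sink path without forbidden subpaths, every vertex from the first one
of indegree `≥ 2` onwards has outdegree `≤ 1`. So the path splits as `P ++ Q` with indegree `≤ 1`
along `P` and outdegree `≤ 1` along `Q`, and the edge joining `P` to `Q` is private: a
source-to-sink path through it is determined backwards from its tail and forwards from its head. -/

theorem List.exists_split_of_forall_infix {α : Type*} {A B : α → Prop} (x y : α) (l : List α)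
    (hx : A x) (hlast : ∀ b ∈ (y :: l).getLast?, B b)
    (hinf : ∀ m, m <:+: x :: y :: l → ∀ a ∈ m.head?, ∀ b ∈ m.getLast?, A a ∨ B b) :
    ∃ P u v Q, x :: y :: l = P ++ u :: v :: Q ∧ (∀ a ∈ P ++ [u], A a) ∧ ∀ b ∈ v :: Q, B b := by
  induction l generalizing x y with
  | nil => exact ⟨[], x, y, [], rfl, by simpa using hx, by simpa using hlast⟩
  | cons z l ih =>
    by_cases hy : A y
    · obtain ⟨P, u, v, Q, hsplit, hP, hQ⟩ := ih y z hy (by simpa using hlast)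
        fun m hm => hinf m (hm.trans (List.suffix_cons x _).isInfix)
      exact ⟨x :: P, u, v, Q, by rw [hsplit]; rfl, by simp_all, hQ⟩
    · refine ⟨[], x, y, z :: l, rfl, by simpa using hx, fun b hb => ?_⟩
      obtain ⟨s, t, hst⟩ := List.append_of_mem hb
      have hm : s ++ [b] <:+: x :: y :: z :: l :=
        (List.IsPrefix.isInfix ⟨t, by simp [hst]⟩).trans (List.suffix_cons x _).isInfix
      have hhead : y ∈ (s ++ [b]).head? := by cases s <;> simp_all
      exact (hinf _ hm y hhead b (by simp)).resolve_left hy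

section

variable {V : Type*} {E : V → V → Prop}

theorem Acyclic.swap (hE : Acyclic E) : Acyclic (Function.swap E) :=
  fun v hv => hE v (Relation.transGen_swap.mp hv)

theorem Acyclic.wellFounded_swap [Finite V] (hE : Acyclic E) : WellFounded (Function.swap E) := by
  have : Std.Irrefl (Relation.TransGen (Function.swap E)) := ⟨hE.swap⟩
  exact (Finite.wellFounded_of_trans_of_irrefl _).mono fun _ _ => Relation.TransGen.single

def IsSourcePath (E : V → V → Prop) (L : List V) (a : V) : Prop :=
  L.IsChain E ∧ L.getLast? = some a ∧ ∃ s ∈ L.head?, IsSource E s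

def IsSinkPath (E : V → V → Prop) (T : List V) (c : V) : Prop :=
  T.IsChain E ∧ T.head? = some c ∧ ∃ t ∈ T.getLast?, IsSink E t

theorem isSourcePath_iff_isSinkPath_reverse {L : List V} {a : V} :
    IsSourcePath E L a ↔ IsSinkPath (Function.swap E) L.reverse a := by
  simp only [IsSourcePath, IsSinkPath, List.isChain_reverse, List.head?_reverse,
    List.getLast?_reverse]
  rfl

theorem exists_isSinkPath [Finite V] (hE : Acyclic E) (c : V) : ∃ T, IsSinkPath E T c := by
  induction c using (Acyclic.wellFounded_swap hE).induction with
  | _ c ih =>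
  by_cases hc : IsSink E c
  · exact ⟨[c], List.isChain_singleton c, rfl, c, rfl, hc⟩
  · obtain ⟨d, hcd⟩ : ∃ d, E c d := by simpa [IsSink] using hc
    obtain ⟨T, hT, hTd, t, ht, hts⟩ := ih d hcd
    refine ⟨c :: T, List.isChain_cons.mpr ⟨by simpa [hTd] using hcd, hT⟩, rfl, t, ?_, hts⟩
    cases T <;> simp_all

theorem exists_isSourcePath [Finite V] (hE : Acyclic E) (a : V) : ∃ L, IsSourcePath E L a := by
  obtain ⟨T, hT⟩ := exists_isSinkPath hE.swap a
  exact ⟨T.reverse, isSourcePath_iff_isSinkPath_reverse.mpr (by simpa using hT)⟩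

theorem IsSinkPath.eq {T T' : List V} {c : V} (hT : IsSinkPath E T c) (hT' : IsSinkPath E T' c)
    (hu : ∀ y ∈ T, {z | E y z}.Subsingleton) : T = T' := by
  induction T generalizing T' c with
  | nil => simp [IsSinkPath] at hT
  | cons x Q ih =>
    obtain ⟨hc, hx, t, ht, hts⟩ := hT
    obtain ⟨hc', hx', t', ht', hts'⟩ := hT'
    obtain rfl : x = c := by simpa using hx
    obtain ⟨Q', rfl⟩ : ∃ Q', T' = x :: Q' := by cases T' <;> simp_all
    cases Q with
    | nil => cases Q' <;> simp_all [IsSink]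
    | cons y Q =>
      obtain _ | ⟨y', Q'⟩ := Q'
      · simp_all [IsSink]
      obtain rfl : y = y' := hu x (by simp) hc.rel hc'.rel
      rw [ih (T' := y :: Q') ⟨hc.tail, rfl, t, by simpa using ht, hts⟩
        ⟨hc'.tail, rfl, t', by simpa using ht', hts'⟩ fun z hz => hu z (by simp [hz])]

theorem IsSourcePath.eq {L L' : List V} {a : V} (hL : IsSourcePath E L a)
    (hL' : IsSourcePath E L' a) (hu : ∀ y ∈ L, {z | E z y}.Subsingleton) : L = L' :=
  List.reverse_injective <|
    (isSourcePath_iff_isSinkPath_reverse.mp hL).eq (isSourcePath_iff_isSinkPath_reverse.mp hL')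
      fun y hy => hu y (List.mem_reverse.mp hy)

theorem IsSourcePath.srcSinkPath_append {L p T : List V} {a c : V} (hL : IsSourcePath E L a)
    (hp : IsPath E p) (ha : ∀ h ∈ p.head?, E a h) (hc : ∀ t ∈ p.getLast?, E t c)
    (hT : IsSinkPath E T c) : SrcSinkPath E (L ++ p ++ T) := by
  obtain ⟨hLc, hLa, s, hs, hsrc⟩ := hL
  obtain ⟨hTc, hTc', t, ht, hsink⟩ := hT
  obtain ⟨hp0, hpc⟩ := hp
  have hL0 : L ≠ [] := by rintro rfl; simp at hLa
  have hT0 : T ≠ [] := by rintro rfl; simp at hTc'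
  refine ⟨⟨by simp [hL0], ?_⟩, ⟨s, by simpa [hL0] using hs, hsrc⟩, t, by simpa [hT0] using ht,
    hsink⟩
  refine (hLc.append hpc ?_).append hTc ?_
  · simpa [hLa] using ha
  · simpa [hp0, hTc'] using hc

theorem SrcSinkPath.isSourcePath_isSinkPath {L T : List V} {u v : V}
    (hp : SrcSinkPath E (L ++ T)) (hu : L.getLast? = some u) (hv : T.head? = some v) :
    IsSourcePath E L u ∧ IsSinkPath E T v := by
  obtain ⟨⟨-, hc⟩, ⟨s, hs, hsrc⟩, t, ht, hsink⟩ := hp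
  have hL0 : L ≠ [] := by rintro rfl; simp at hu
  have hT0 : T ≠ [] := by rintro rfl; simp at hv
  exact ⟨⟨hc.left_of_append, hu, s, by simpa [hL0] using hs, hsrc⟩,
    ⟨hc.right_of_append, hv, t, by simpa [hT0] using ht, hsink⟩⟩

theorem SrcSinkPath.exists_eq_cons_cons (hni : NoIsolated E) {p : List V}
    (hp : SrcSinkPath E p) : ∃ x y l, p = x :: y :: l := by
  obtain ⟨⟨hp0, -⟩, ⟨s, hs, hsrc⟩, t, ht, hsink⟩ := hp
  match p, hp0 with
  | [x], _ =>
    obtain ⟨rfl, rfl⟩ : x = s ∧ x = t := by simp_all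
    rcases hni x with ⟨u, hu⟩ | ⟨w, hw⟩
    exacts [(hsrc u hu).elim, (hsink w hw).elim]
  | x :: y :: l, _ => exact ⟨x, y, l, rfl⟩

theorem EdgeOn.append_left {p : List V} {u v : V} (h : EdgeOn p u v) (L : List V) :
    EdgeOn (L ++ p) u v := by
  obtain ⟨l₁, l₂, rfl⟩ := h
  exact ⟨L ++ l₁, l₂, by simp⟩

theorem EdgeOn.append_right {p : List V} {u v : V} (h : EdgeOn p u v) (T : List V) :
    EdgeOn (p ++ T) u v := by
  obtain ⟨l₁, l₂, rfl⟩ := h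
  exact ⟨l₁, l₂ ++ T, by simp⟩

theorem EdgeOn.append_append_or {L p T : List V} {u v : V} (h : EdgeOn (L ++ p ++ T) u v)
    (hp : p ≠ []) : EdgeOn (L ++ p) u v ∨ EdgeOn (p ++ T) u v := by
  obtain ⟨l₁, l₂, h⟩ := h
  rw [List.append_assoc, List.append_eq_append_iff] at h
  obtain ⟨a, -, h⟩ | ⟨c, rfl, h⟩ := h
  · exact .inr ⟨a, l₂, h⟩
  obtain _ | ⟨_, _ | ⟨_, c⟩⟩ := c
  · exact .inr ⟨[], l₂, h.symm⟩
  · obtain ⟨x, p, rfl⟩ := List.exists_cons_of_ne_nil hp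
    simp only [List.cons_append, List.nil_append, List.cons.injEq] at h
    exact .inl ⟨l₁, p, by simp [h.1, h.2.1]⟩
  · simp only [List.cons_append, List.cons.injEq] at h
    exact .inl ⟨l₁, c ++ p, by simp [h.1, h.2.1]⟩

theorem eq_of_muE_eq_one {q q' : List V} {u v : V} (h : muE E u v = 1)
    (hq : SrcSinkPath E q) (hqe : EdgeOn q u v) (hq' : SrcSinkPath E q') (hqe' : EdgeOn q' u v) :
    q = q' := by
  obtain ⟨w, hw⟩ := Set.ncard_eq_one.mp h
  have hmem : ∀ r, SrcSinkPath E r → EdgeOn r u v → r = w := fun r hr hre =>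
    Set.mem_singleton_iff.mp (hw ▸ ⟨hr, hre⟩)
  rw [hmem q hq hqe, hmem q' hq' hqe']

theorem muE_eq_one_of_subsingleton {P Q : List V} {u v : V}
    (hp : SrcSinkPath E (P ++ u :: v :: Q)) (hP : ∀ x ∈ P ++ [u], {a | E a x}.Subsingleton)
    (hQ : ∀ x ∈ v :: Q, {b | E x b}.Subsingleton) : muE E u v = 1 := by
  have hsplit : ∀ {l₁ l₂ : List V}, SrcSinkPath E (l₁ ++ u :: v :: l₂) →
      IsSourcePath E (l₁ ++ [u]) u ∧ IsSinkPath E (v :: l₂) v := fun h =>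
    SrcSinkPath.isSourcePath_isSinkPath (by simpa using h) (by simp) rfl
  refine Set.ncard_eq_one.mpr ⟨_, Set.eq_singleton_iff_unique_mem.mpr ⟨⟨hp, P, Q, rfl⟩, ?_⟩⟩
  rintro _ ⟨hq, l₁, l₂, rfl⟩
  obtain ⟨hPs, hQs⟩ := hsplit hp
  obtain ⟨hls, hlt⟩ := hsplit hq
  rw [List.append_cancel_right (hPs.eq hls hP), List.tail_eq_of_cons_eq (hQs.eq hlt hQ)]

def IsForbiddenPath (E : V → V → Prop) (p : List V) : Prop :=
  IsPath E p ∧ (∃ h, p.head? = some h ∧ ∃ a b, a ≠ b ∧ E a h ∧ E b h) ∧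
    (∃ t, p.getLast? = some t ∧ ∃ c d, c ≠ d ∧ E t c ∧ E t d)

theorem not_isForbiddenPath_of_funnel [Finite V] (hE : Acyclic E) (hF : Funnel E)
    (p : List V) : ¬ IsForbiddenPath E p := by
  rintro ⟨hp, ⟨h, hph, a, b, hab, hah, hbh⟩, t, hpt, c, d, hcd, htc, htd⟩
  obtain ⟨La, hLa⟩ := exists_isSourcePath hE a
  obtain ⟨Lb, hLb⟩ := exists_isSourcePath hE b
  obtain ⟨Tc, hTc⟩ := exists_isSinkPath hE c
  obtain ⟨Td, hTd⟩ := exists_isSinkPath hE d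
  have glue {L T : List V} {x y : V} (hL : IsSourcePath E L x) (hx : E x h) (hy : E t y)
      (hT : IsSinkPath E T y) : SrcSinkPath E (L ++ p ++ T) :=
    hL.srcSinkPath_append hp (by simpa [hph]) (by simpa [hpt]) hT
  have hac := glue hLa hah htc hTc
  obtain ⟨u, v, he, hmu⟩ := hF _ hac
  rcases he.append_append_or hp.1 with he | he
  · have hTcd : Tc = Td := List.append_cancel_left <|
      eq_of_muE_eq_one hmu hac (he.append_right Tc) (glue hLa hah htd hTd) (he.append_right Td)
    exact hcd (Option.some.inj (hTc.2.1.symm.trans (hTcd ▸ hTd.2.1)))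
  · have hLab : La = Lb := by
      simpa using eq_of_muE_eq_one hmu hac (by simpa using he.append_left La)
        (glue hLb hbh htc hTc) (by simpa using he.append_left Lb)
    exact hab (Option.some.inj (hLa.2.1.symm.trans (hLab ▸ hLb.2.1)))

theorem funnel_of_forall_not_isForbiddenPath (hni : NoIsolated E)
    (hnf : ∀ p, ¬ IsForbiddenPath E p) : Funnel E := by
  intro p hp
  obtain ⟨x, y, l, rfl⟩ := hp.exists_eq_cons_cons hni
  have hx : {a | E a x}.Subsingleton := by
    obtain ⟨s, hs, hsrc⟩ := hp.2.1
    obtain rfl : x = s := by simpa using hs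
    exact fun a ha => (hsrc a ha).elim
  have hlast : ∀ t ∈ (y :: l).getLast?, {c | E t c}.Subsingleton := by
    obtain ⟨t, ht, hsink⟩ := hp.2.2
    intro b hb
    obtain rfl : b = t := Option.mem_unique hb (by simpa using ht)
    exact fun c hc => (hsink c hc).elim
  have hinf : ∀ m, m <:+: x :: y :: l → ∀ a ∈ m.head?, ∀ b ∈ m.getLast?,
      {c | E c a}.Subsingleton ∨ {c | E b c}.Subsingleton := by
    intro m hm a ha b hb
    by_contra! hab
    obtain ⟨a₁, ha₁, a₂, ha₂, ha₁₂⟩ := hab.1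
    obtain ⟨c₁, hc₁, c₂, hc₂, hc₁₂⟩ := hab.2
    exact hnf m ⟨⟨by rintro rfl; simp at ha, hp.1.2.infix hm⟩,
      ⟨a, Option.mem_def.mp ha, a₁, a₂, ha₁₂, ha₁, ha₂⟩,
      ⟨b, Option.mem_def.mp hb, c₁, c₂, hc₁₂, hc₁, hc₂⟩⟩
  obtain ⟨P, u, v, Q, hsplit, hP, hQ⟩ := List.exists_split_of_forall_infix x y l hx hlast hinf
  rw [hsplit] at hp ⊢
  exact ⟨u, v, ⟨P, Q, rfl⟩, muE_eq_one_of_subsingleton hp hP hQ⟩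

end

/-- Funnel iff no forbidden path: no path whose first vertex has indegree ≥ 2
and whose last vertex has outdegree ≥ 2. -/
theorem stmt8 {V : Type*} [Fintype V] (E : V → V → Prop) (hE : Acyclic E)
    (hni : NoIsolated E) :
    Funnel E ↔ ¬ ∃ p : List V, IsPath E p ∧
      (∃ h, p.head? = some h ∧ ∃ a b, a ≠ b ∧ E a h ∧ E b h) ∧
      (∃ t, p.getLast? = some t ∧ ∃ c d, c ≠ d ∧ E t c ∧ E t d) :=
  ⟨fun hF ⟨p, hp⟩ => not_isForbiddenPath_of_funnel hE hF p hp,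
    fun h => funnel_of_forall_not_isForbiddenPath hni fun p hp => h ⟨p, hp⟩⟩
end

section
/- For every k > 1 there exists a DAG that is in ST_k (every vertex v has μ_s(v) ≤ k or μ_t(v) ≤ k) but is not a k-funnel; hence the inclusion of k-funnels in ST_k is strict for k > 1. -/
/-!
In the witness graph every vertex other than `a` and `b` is a source or a sink, so it has
`μ_s = 1` or `μ_t = 1`, while `μ_s(a) = k` and `μ_t(b) = k`; hence the graph lies in `ST_k`.
On the path `src i → a → b → snk j`, however, every edge lies on more than `k` source-to-sink
paths: `(src i, a)` also on the detour through the sink `snk₀`, `(b, snk j)` also on the one from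
the source `src₀`, and `(a, b)` on all `k²` paths `src i → a → b → snk j`. The graph is built on an
inductive vertex type and moved to `Fin n` along an equivalence, under which all of `μ_s`, `μ_t`,
`μ` are invariant.
-/

open List

open Function

section Paths

variable {V : Type*} {E : V → V → Prop}

lemma isPath_iff {p : List V} : IsPath E p ↔ p ≠ [] ∧ p.IsChain E := Iff.rfl

lemma acyclic_of_strictMono {α : Type*} [Preorder α] (r : V → α)
    (hr : ∀ u v, E u v → r u < r v) : Acyclic E := by
  intro v hv
  have := Relation.TransGen.lift r hr v v hv
  rw [Relation.transGen_eq_self] at this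
  exact lt_irrefl _ this

lemma Acyclic.nodup_of_isPath (h : Acyclic E) {p : List V} (hp : IsPath E p) : p.Nodup := by
  refine ((isPath_iff.1 hp).2.imp fun _ _ => Relation.TransGen.single).pairwise.imp ?_
  rintro u _ huu rfl
  exact h u huu

lemma Acyclic.finite_setOf_isPath [Fintype V] (h : Acyclic E) : {p | IsPath E p}.Finite :=
  (List.finite_length_le V (Fintype.card V)).subset fun _ hp =>
    (h.nodup_of_isPath hp).length_le_card

lemma Acyclic.card_le_muE [Fintype V] (h : Acyclic E) {ι : Type*} {f : ι → List V}
    (hf : Injective f) {u v : V} (hpath : ∀ i, SrcSinkPath E (f i) ∧ EdgeOn (f i) u v) :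
    Nat.card ι ≤ muE E u v := by
  rw [← Set.ncard_range_of_injective hf]
  exact Set.ncard_le_ncard (Set.range_subset_iff.2 hpath)
    (h.finite_setOf_isPath.subset fun _ hp => hp.1.1)

lemma isPath_append_pair {q : List V} {u v : V} :
    IsPath E (q ++ [u, v]) ↔ IsPath E (q ++ [u]) ∧ E u v := by
  simp [isPath_iff, List.isChain_split (l₂ := [v])]

lemma eq_singleton_or_eq_append_pair {p : List V} {v : V} (hlast : p.getLast? = some v) :
    p = [v] ∨ ∃ q u, p = q ++ [u, v] := by
  obtain ⟨q, rfl⟩ := List.getLast?_eq_some_iff.1 hlast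
  rcases q.eq_nil_or_concat with rfl | ⟨q, u, rfl⟩
  · exact .inl rfl
  · exact .inr ⟨q, u, by simp⟩

lemma IsPath.eq_singleton_of_isSource {p : List V} (hp : IsPath E p) {v : V}
    (hlast : p.getLast? = some v) (hv : IsSource E v) : p = [v] := by
  obtain h | ⟨q, u, rfl⟩ := eq_singleton_or_eq_append_pair hlast
  · exact h
  · exact absurd (isPath_append_pair.1 hp).2 (hv u)

lemma muS_le_one {v : V} (hv : IsSource E v) : muS E v ≤ 1 := by
  refine (Set.ncard_le_ncard (t := {[v]}) ?_).trans (Set.ncard_singleton _).le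
  rintro p ⟨hp, -, hlast⟩
  exact hp.eq_singleton_of_isSource hlast hv

lemma muS_le_ncard_of_forall_isSource [Finite V] {v : V} (hv : ¬ IsSource E v)
    (hin : ∀ u, E u v → IsSource E u) : muS E v ≤ {u | E u v}.ncard := by
  refine (Set.ncard_le_ncard (t := (fun u => [u, v]) '' {u | E u v}) ?_ (Set.toFinite _)).trans
    (Set.ncard_image_le (Set.toFinite _))
  rintro p ⟨hp, ⟨s, hhead, hs⟩, hlast⟩
  obtain rfl | ⟨q, u, rfl⟩ := eq_singleton_or_eq_append_pair hlast
  · obtain rfl : v = s := by simpa using hhead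
    exact absurd hs hv
  · obtain ⟨hq, hu⟩ := isPath_append_pair.1 hp
    obtain rfl : q = [] := by simpa using hq.eq_singleton_of_isSource (by simp) (hin u hu)
    exact ⟨u, hu, rfl⟩

lemma muT_eq_muS_flip (v : V) : muT E v = muS (flip E) v := by
  rw [muT, muS, ← Set.ncard_preimage_of_injective_subset_range List.reverse_injective
    fun p _ => ⟨p.reverse, p.reverse_reverse⟩]
  congr 1
  ext p
  simp only [Set.mem_preimage, Set.mem_ofPred_eq, isPath_iff, IsSource, IsSink,
    List.isChain_reverse, ne_eq, List.reverse_eq_nil_iff, List.head?_reverse,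
    List.getLast?_reverse, flip]
  tauto

lemma muT_le_one {v : V} (hv : IsSink E v) : muT E v ≤ 1 :=
  muT_eq_muS_flip (E := E) v ▸ muS_le_one hv

lemma muT_le_ncard_of_forall_isSink [Finite V] {v : V} (hv : ¬ IsSink E v)
    (hout : ∀ w, E v w → IsSink E w) : muT E v ≤ {w | E v w}.ncard :=
  muT_eq_muS_flip (E := E) v ▸ muS_le_ncard_of_forall_isSource hv hout

lemma edgeOn_cons_cons_iff {x y u v : V} {l : List V} :
    EdgeOn (x :: y :: l) u v ↔ (u = x ∧ v = y) ∨ EdgeOn (y :: l) u v := by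
  constructor
  · rintro ⟨_ | ⟨z, l₁⟩, l₂, h⟩
    · simp only [List.nil_append, List.cons.injEq] at h
      exact .inl ⟨h.1.symm, h.2.1.symm⟩
    · simp only [List.cons_append, List.cons.injEq] at h
      exact .inr ⟨l₁, l₂, h.2⟩
  · rintro (⟨rfl, rfl⟩ | ⟨l₁, l₂, h⟩)
    · exact ⟨[], l, rfl⟩
    · exact ⟨x :: l₁, l₂, by simp [h]⟩

lemma not_edgeOn_singleton {x u v : V} : ¬ EdgeOn [x] u v := by
  rintro ⟨l₁, l₂, h⟩
  have := congrArg List.length h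
  simp only [List.length_append, List.length_cons, List.length_nil] at this
  omega

end Paths

section Relabel

variable {V W : Type*} (e : V ≃ W) {G : W → W → Prop}

lemma Acyclic.onFun (f : V → W) (h : Acyclic G) : Acyclic (G on f) :=
  fun v hv => h (f v) (Relation.TransGen.lift f (fun _ _ h => h) v v hv)

lemma isPath_onFun {p : List V} : IsPath (G on e) p ↔ IsPath G (p.map e) := by
  simp [isPath_iff, List.isChain_map]

lemma isSource_onFun {v : V} : IsSource (G on e) v ↔ IsSource G (e v) := by
  simp [IsSource, onFun, e.forall_congr_left]

lemma isSink_onFun {v : V} : IsSink (G on e) v ↔ IsSink G (e v) := by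
  simp [IsSink, onFun, e.forall_congr_left]

lemma srcSinkPath_onFun {p : List V} : SrcSinkPath (G on e) p ↔ SrcSinkPath G (p.map e) := by
  simp [SrcSinkPath, isPath_onFun, isSource_onFun, isSink_onFun]

lemma EdgeOn.map (f : V → W) {p : List V} {u v : V} (h : EdgeOn p u v) :
    EdgeOn (p.map f) (f u) (f v) := by
  obtain ⟨l₁, l₂, rfl⟩ := h
  exact ⟨l₁.map f, l₂.map f, by simp⟩

lemma edgeOn_map_equiv_iff {p : List V} {u v : V} :
    EdgeOn (p.map e) (e u) (e v) ↔ EdgeOn p u v :=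
  ⟨fun h => by simpa using h.map e.symm, EdgeOn.map e⟩

lemma ncard_preimage_map_equiv (s : Set (List W)) : (List.map e ⁻¹' s).ncard = s.ncard :=
  Set.ncard_preimage_of_injective_subset_range (List.map_injective_iff.2 e.injective)
    fun q _ => ⟨q.map e.symm, by simp⟩

lemma muS_onFun (v : V) : muS (G on e) v = muS G (e v) := by
  rw [muS, muS, ← ncard_preimage_map_equiv e]
  congr 1
  ext p
  simp [isPath_onFun, isSource_onFun]

lemma muT_onFun (v : V) : muT (G on e) v = muT G (e v) := by
  rw [muT_eq_muS_flip, muT_eq_muS_flip]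
  exact muS_onFun e (G := flip G) v

lemma muE_onFun (u v : V) : muE (G on e) u v = muE G (e u) (e v) := by
  rw [muE, muE, ← ncard_preimage_map_equiv e]
  congr 1
  ext p
  simp [srcSinkPath_onFun, edgeOn_map_equiv_iff]

lemma NoIsolated.onFun (h : NoIsolated G) : NoIsolated (G on e) := by
  intro v
  rcases h (e v) with ⟨u, hu⟩ | ⟨w, hw⟩
  · exact .inl ⟨e.symm u, by rwa [onFun_apply, e.apply_symm_apply]⟩
  · exact .inr ⟨e.symm w, by rwa [onFun_apply, e.apply_symm_apply]⟩

lemma KFunnel.of_onFun {k : ℕ} (h : KFunnel (G on e) k) : KFunnel G k := by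
  intro q hq
  obtain ⟨u, v, huv, hμ⟩ := h (q.map e.symm) ((srcSinkPath_onFun e).2 (by simpa using hq))
  exact ⟨e u, e v, by simpa using huv.map e, muE_onFun e u v ▸ hμ⟩

end Relabel

namespace Witness

inductive Vertex (k : ℕ)
  | src (i : Fin k)
  | src₀
  | a
  | b
  | snk₀
  | snk (j : Fin k)
  deriving Fintype

open Vertex

variable {k : ℕ}

def Adj : Vertex k → Vertex k → Prop
  | src _, a | src₀, b | a, b | a, snk₀ | b, snk _ => True
  | _, _ => False

def level : Vertex k → ℕ
  | src _ | src₀ => 0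
  | a => 1
  | b => 2
  | snk₀ | snk _ => 3

lemma acyclic : Acyclic (Adj (k := k)) :=
  acyclic_of_strictMono level fun u v h => by cases u <;> cases v <;> simp_all [Adj, level]

lemma noIsolated (hk : 0 < k) : NoIsolated (Adj (k := k)) := by
  intro v
  cases v
  · exact .inr ⟨a, trivial⟩
  · exact .inr ⟨b, trivial⟩
  · exact .inr ⟨b, trivial⟩
  · exact .inr ⟨snk ⟨0, hk⟩, trivial⟩
  · exact .inl ⟨a, trivial⟩
  · exact .inl ⟨b, trivial⟩

lemma isSource_src (i : Fin k) : IsSource Adj (src i) := fun u => by cases u <;> simp [Adj]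

lemma isSource_src₀ : IsSource Adj (src₀ : Vertex k) := fun u => by cases u <;> simp [Adj]

lemma isSink_snk (j : Fin k) : IsSink Adj (snk j) := fun w => by cases w <;> simp [Adj]

lemma isSink_snk₀ : IsSink Adj (snk₀ : Vertex k) := fun w => by cases w <;> simp [Adj]

lemma ncard_setOf_adj_a : {u | Adj u (a : Vertex k)}.ncard = k := by
  have : {u | Adj u (a : Vertex k)} = Set.range src := by
    ext u
    cases u <;> simp [Adj]
  simp [this, Set.ncard_range_of_injective fun _ _ => src.inj]

lemma ncard_setOf_adj_b : {w | Adj (b : Vertex k) w}.ncard = k := by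
  have : {w | Adj (b : Vertex k) w} = Set.range snk := by
    ext w
    cases w <;> simp [Adj]
  simp [this, Set.ncard_range_of_injective fun _ _ => snk.inj]

lemma muS_le_or_muT_le (hk : 0 < k) (v : Vertex k) : muS Adj v ≤ k ∨ muT Adj v ≤ k := by
  cases v with
  | src i => exact .inl ((muS_le_one (isSource_src i)).trans hk)
  | src₀ => exact .inl ((muS_le_one isSource_src₀).trans hk)
  | a =>
    refine .inl ((muS_le_ncard_of_forall_isSource ?_ ?_).trans ncard_setOf_adj_a.le)
    · exact fun h => h (src ⟨0, hk⟩) trivial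
    · rintro (_ | _ | _ | _ | _ | _) h <;> first | exact isSource_src _ | exact h.elim
  | b =>
    refine .inr ((muT_le_ncard_of_forall_isSink ?_ ?_).trans ncard_setOf_adj_b.le)
    · exact fun h => h (snk ⟨0, hk⟩) trivial
    · rintro (_ | _ | _ | _ | _ | _) h <;> first | exact isSink_snk _ | exact h.elim
  | snk₀ => exact .inr ((muT_le_one isSink_snk₀).trans hk)
  | snk j => exact .inr ((muT_le_one (isSink_snk j)).trans hk)

lemma srcSinkPath_src_a_b_snk (i j : Fin k) : SrcSinkPath Adj [src i, a, b, snk j] :=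
  ⟨isPath_iff.2 ⟨by simp, by simp [Adj]⟩, ⟨_, rfl, isSource_src i⟩, ⟨_, rfl, isSink_snk j⟩⟩

lemma srcSinkPath_src_a_snk₀ (i : Fin k) : SrcSinkPath Adj [src i, a, snk₀] :=
  ⟨isPath_iff.2 ⟨by simp, by simp [Adj]⟩, ⟨_, rfl, isSource_src i⟩, ⟨_, rfl, isSink_snk₀⟩⟩

lemma srcSinkPath_src₀_b_snk (j : Fin k) : SrcSinkPath Adj [src₀, b, snk j] :=
  ⟨isPath_iff.2 ⟨by simp, by simp [Adj]⟩, ⟨_, rfl, isSource_src₀⟩, ⟨_, rfl, isSink_snk j⟩⟩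

lemma le_muE_src_a (i : Fin k) : k + 1 ≤ muE Adj (src i) a := by
  have := acyclic.card_le_muE (ι := Option (Fin k))
    (f := fun | none => [src i, a, snk₀] | some j => [src i, a, b, snk j])
    (by rintro (_ | j) (_ | j') h <;> simp_all)
    (u := src i) (v := a)
    (by rintro (_ | j)
        · exact ⟨srcSinkPath_src_a_snk₀ i, [], [snk₀], rfl⟩
        · exact ⟨srcSinkPath_src_a_b_snk i j, [], [b, snk j], rfl⟩)
  simpa using this

lemma le_muE_a_b : k * k ≤ muE Adj (a : Vertex k) b := by
  have := acyclic.card_le_muE (ι := Fin k × Fin k) (f := fun ij => [src ij.1, a, b, snk ij.2])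
    (by rintro ⟨i, j⟩ ⟨i', j'⟩ h; simp_all)
    (u := a) (v := b) (fun ij => ⟨srcSinkPath_src_a_b_snk ij.1 ij.2, [src ij.1], [snk ij.2], rfl⟩)
  simpa using this

lemma le_muE_b_snk (j : Fin k) : k + 1 ≤ muE Adj b (snk j) := by
  have := acyclic.card_le_muE (ι := Option (Fin k))
    (f := fun | none => [src₀, b, snk j] | some i => [src i, a, b, snk j])
    (by rintro (_ | i) (_ | i') h <;> simp_all)
    (u := b) (v := snk j)
    (by rintro (_ | i)
        · exact ⟨srcSinkPath_src₀_b_snk j, [src₀], [], rfl⟩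
        · exact ⟨srcSinkPath_src_a_b_snk i j, [src i, a], [], rfl⟩)
  simpa using this

lemma not_kFunnel (hk : 1 < k) : ¬ KFunnel (Adj (k := k)) k := by
  intro h
  obtain ⟨u, v, huv, hμ⟩ := h _ (srcSinkPath_src_a_b_snk ⟨0, by omega⟩ ⟨0, by omega⟩)
  simp only [edgeOn_cons_cons_iff, not_edgeOn_singleton, or_false] at huv
  rcases huv with ⟨rfl, rfl⟩ | ⟨rfl, rfl⟩ | ⟨rfl, rfl⟩
  · have := le_muE_src_a (k := k) ⟨0, by omega⟩
    omega
  · have := le_muE_a_b (k := k)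
    nlinarith
  · have := le_muE_b_snk (k := k) ⟨0, by omega⟩
    omega

end Witness

/-- For every `k > 1` there is a DAG in `ST_k` that is not a `k`-funnel. -/
theorem stmt12 (k : ℕ) (hk : 1 < k) :
    ∃ (n : ℕ) (E : Fin n → Fin n → Prop), Acyclic E ∧ NoIsolated E ∧
      (∀ v, muS E v ≤ k ∨ muT E v ≤ k) ∧ ¬ KFunnel E k := by
  obtain ⟨n, ⟨e⟩⟩ := Finite.exists_equiv_fin (Witness.Vertex k)
  refine ⟨n, Witness.Adj on e.symm, Witness.acyclic.onFun _,
    (Witness.noIsolated (by omega)).onFun e.symm, fun v => ?_,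
    fun h => Witness.not_kFunnel hk (h.of_onFun e.symm)⟩
  rw [muS_onFun, muT_onFun]
  exact Witness.muS_le_or_muT_le (by omega) _
end

section
/- Let G be a DAG and let w be the maximum over all source-to-sink paths P of min_{e ∈ P} μ(e) (the weight of a widest source-to-sink path under edge weights μ). Then w is the minimum k such that G is a k-funnel: G is a w-funnel and G is not a (w−1)-funnel. -/
open List

namespace Acyclic

variable {V : Type*} {E : V → V → Prop}

theorem nodup_of_isChain_s14 (hE : Acyclic E) {p : List V} (hp : p.IsChain E) : p.Nodup := by
  have hpair : p.Pairwise (Relation.TransGen E) :=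
    List.isChain_iff_pairwise.1 (hp.imp fun _ _ => Relation.TransGen.single)
  exact hpair.imp fun {a _} huv => by rintro rfl; exact hE a huv

theorem finite_setOf_isChain [Fintype V] (hE : Acyclic E) : {p : List V | p.IsChain E}.Finite :=
  (List.finite_length_le V (Fintype.card V)).subset fun _ hp =>
    (hE.nodup_of_isChain_s14 hp).length_le_card

end Acyclic

/-- `ncard` is junk (zero) on infinite sets, so positivity of `μ` needs the finiteness
of the path set, which acyclicity provides. -/
theorem muE_pos_of_edgeOn {V : Type*} [Fintype V] {E : V → V → Prop} (hE : Acyclic E)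
    {p : List V} (hp : SrcSinkPath E p) {u v : V} (huv : EdgeOn p u v) : 0 < muE E u v :=
  (Set.ncard_pos (hE.finite_setOf_isChain.subset fun _ hq => hq.1.1.2)).2 ⟨p, hp, huv⟩

/-- The weight `w` of a widest source-to-sink path under edge weights `μ` is the
minimum `k` such that `G` is a `k`-funnel. -/
theorem stmt14 {V : Type*} [Fintype V] (E : V → V → Prop) (hE : Acyclic E) (w : ℕ)
    (h1 : ∃ p, SrcSinkPath E p ∧ (∃ a b, EdgeOn p a b) ∧
      ∀ u v, EdgeOn p u v → w ≤ muE E u v)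
    (h2 : ∀ p, SrcSinkPath E p → ∃ u v, EdgeOn p u v ∧ muE E u v ≤ w) :
    KFunnel E w ∧ ¬ KFunnel E (w - 1) := by
  refine ⟨h2, fun hfunnel => ?_⟩
  obtain ⟨p, hp, -, hwide⟩ := h1
  obtain ⟨u, v, huv, hle⟩ := hfunnel p hp
  have hpos := muE_pos_of_edgeOn hE hp huv
  have hge := hwide u v huv
  omega
end
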